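/- Let X ⊆ R^n be a convex set and f : X → R be radially lower semicontinuous and pseudoconvex with respect to the lower Dini derivative. Then f is quasiconvex: for all x, y ∈ X and t ∈ [0,1], f(x + t(y-x)) ≤ max(f(x), f(y)). -/

import Mathlib

open Filter Set

/-- Lower Dini directional derivative of a function of one real variable. -/
noncomputable def dini (φ : ℝ → ℝ) (s u : ℝ) : ℝ :=
  liminf (fun h : ℝ => (φ (s + h * u) - φ s) / h) (nhdsWithin 0 (Ioi 0))

/-- Pseudoconvexity w.r.t. the lower Dini derivative, one variable. -/
def PseudoconvexOn (φ : ℝ → ℝ) (I : Set ℝ) : Prop :=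
  ∀ s ∈ I, ∀ t ∈ I, φ t < φ s → dini φ s (t - s) < 0

/-- A direction `u` is admissible at `s` relative to `I`. -/
def Admissible (I : Set ℝ) (s u : ℝ) : Prop :=
  ∃ δ > 0, ∀ h ∈ Ioo (0:ℝ) δ, s + h * u ∈ I

/-- `s` is a stationary point of `φ` relative to `I`. -/
def Stationary (φ : ℝ → ℝ) (I : Set ℝ) (s : ℝ) : Prop :=
  ∀ u : ℝ, Admissible I s u → 0 ≤ dini φ s u

/-- Lower Dini directional derivative of `f : ℝⁿ → ℝ` at `x` in direction `u`. -/
noncomputable def diniV {n : ℕ} (f : (Fin n → ℝ) → ℝ) (x u : Fin n → ℝ) : ℝ :=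
  liminf (fun h : ℝ => (f (x + h • u) - f x) / h) (nhdsWithin 0 (Ioi 0))

/-- Pseudoconvexity of `f` on `X ⊆ ℝⁿ` w.r.t. the lower Dini derivative. -/
def PseudoconvexOnV {n : ℕ} (f : (Fin n → ℝ) → ℝ) (X : Set (Fin n → ℝ)) : Prop :=
  ∀ x ∈ X, ∀ y ∈ X, f y < f x → diniV f x (y - x) < 0

/-- A direction `u` is admissible at `x` relative to `X`. -/
def AdmissibleV {n : ℕ} (X : Set (Fin n → ℝ)) (x u : Fin n → ℝ) : Prop :=
  ∃ δ > 0, ∀ h ∈ Ioo (0:ℝ) δ, x + h • u ∈ X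

/-- `x` is a stationary point of `f` relative to `X`. -/
def StationaryV {n : ℕ} (f : (Fin n → ℝ) → ℝ) (X : Set (Fin n → ℝ)) (x : Fin n → ℝ) : Prop :=
  ∀ u : Fin n → ℝ, AdmissibleV X x u → 0 ≤ diniV f x u

/-- `f` is radially lower semicontinuous on `X`: lsc on every segment. -/
def RadiallyLSC {n : ℕ} (f : (Fin n → ℝ) → ℝ) (X : Set (Fin n → ℝ)) : Prop :=
  ∀ x ∈ X, ∀ y ∈ X,
    LowerSemicontinuousOn (fun t : ℝ => f (x + t • (y - x))) (Icc 0 1)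

/-- `f` is radially upper semicontinuous on `X`: usc on every segment. -/
def RadiallyUSC {n : ℕ} (f : (Fin n → ℝ) → ℝ) (X : Set (Fin n → ℝ)) : Prop :=
  ∀ x ∈ X, ∀ y ∈ X,
    UpperSemicontinuousOn (fun t : ℝ => f (x + t • (y - x))) (Icc 0 1)

/-- `f` is quasiconvex on `X`. -/
def QuasiconvexOnSeg {n : ℕ} (f : (Fin n → ℝ) → ℝ) (X : Set (Fin n → ℝ)) : Prop :=
  ∀ x ∈ X, ∀ y ∈ X, ∀ t ∈ Icc (0:ℝ) 1, f (x + t • (y - x)) ≤ max (f x) (f y)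

/-- `f` is semistrictly quasiconvex on `X`. -/
def SemistrictlyQuasiconvexOn {n : ℕ} (f : (Fin n → ℝ) → ℝ) (X : Set (Fin n → ℝ)) : Prop :=
  ∀ x ∈ X, ∀ y ∈ X, f y < f x → ∀ t ∈ Ioo (0:ℝ) 1, f (x + t • (y - x)) < f x

/-!
Restricted to a segment, `f` becomes a lower semicontinuous pseudoconvex function `φ` on an
interval `[a, b]`. If `φ t > max (φ a) (φ b)`, lower semicontinuity keeps `φ` above this maximum on
an open interval around `t`. Every point there lies higher than `a`, so pseudoconvexity yields
smaller values arbitrarily close on its left, and together with lower semicontinuity this forces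
`φ` to be nondecreasing on the interval. But `t` also lies higher than `b`, so it has smaller
values arbitrarily close on its right: a contradiction.
-/

open Topology

lemma frequently_neg_of_liminf_neg {α : Type*} {u : α → ℝ} {l : Filter α}
    (h : liminf u l < 0) : ∃ᶠ t in l, u t < 0 := by
  by_cases hbdd : IsCoboundedUnder (· ≥ ·) l u
  · exact frequently_lt_of_liminf_lt hbdd h
  · -- otherwise `liminf u l` is the junk value `sSup` of a set unbounded above, i.e. `0`
    have hbdd : ¬BddAbove {a | ∀ᶠ t in l, a ≤ u t} := hbdd
    rw [liminf_eq, Real.sSup_of_not_bddAbove hbdd] at h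
    exact absurd h (lt_irrefl 0)

lemma frequently_lt_of_dini_neg {φ : ℝ → ℝ} {s u : ℝ} (h : dini φ s u < 0) :
    ∃ᶠ r in 𝓝[>] 0, φ (s + r * u) < φ s := by
  refine ((frequently_neg_of_liminf_neg h).and_eventually self_mem_nhdsWithin).mono ?_
  rintro r ⟨hneg, hr : 0 < r⟩
  exact sub_neg.1 (neg_of_div_neg_left hneg hr.le)

lemma frequently_nhdsWithin_lt_of_dini_neg {φ : ℝ → ℝ} {s u : ℝ} {S : Set ℝ}
    (h : dini φ s u < 0) (hS : ∀ r > 0, s + r * u ∈ S) : ∃ᶠ r in 𝓝[S] s, φ r < φ s := by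
  have hcont : Tendsto (fun r : ℝ => s + r * u) (𝓝[>] 0) (𝓝 s) :=
    (Continuous.tendsto' (by fun_prop) 0 s (by simp)).mono_left nhdsWithin_le_nhds
  refine (tendsto_nhdsWithin_iff.2 ⟨hcont, ?_⟩).frequently (frequently_lt_of_dini_neg h)
  filter_upwards [self_mem_nhdsWithin] with r hr using hS r hr

lemma PseudoconvexOn.frequently_nhdsLT_lt {φ : ℝ → ℝ} {I : Set ℝ} (hpc : PseudoconvexOn φ I)
    {s t : ℝ} (hs : s ∈ I) (ht : t ∈ I) (hts : t < s) (hlt : φ t < φ s) :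
    ∃ᶠ r in 𝓝[<] s, φ r < φ s :=
  frequently_nhdsWithin_lt_of_dini_neg (hpc s hs t ht hlt) fun _ hr =>
    add_lt_iff_neg_left.2 (mul_neg_of_pos_of_neg hr (sub_neg.2 hts))

lemma PseudoconvexOn.frequently_nhdsGT_lt {φ : ℝ → ℝ} {I : Set ℝ} (hpc : PseudoconvexOn φ I)
    {s t : ℝ} (hs : s ∈ I) (ht : t ∈ I) (hst : s < t) (hlt : φ t < φ s) :
    ∃ᶠ r in 𝓝[>] s, φ r < φ s :=
  frequently_nhdsWithin_lt_of_dini_neg (hpc s hs t ht hlt) fun _ hr =>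
    lt_add_of_pos_right s (mul_pos hr (sub_pos.2 hst))

/-- The least point of the closed set `{φ ≤ φ b}` has no point of that set just to its left,
so it is `a`. -/
lemma LowerSemicontinuousOn.le_of_frequently_nhdsLT_lt {φ : ℝ → ℝ} {a b : ℝ} (hab : a ≤ b)
    (hφ : LowerSemicontinuousOn φ (Icc a b))
    (hdesc : ∀ τ ∈ Ioc a b, ∃ᶠ r in 𝓝[<] τ, φ r < φ τ) : φ a ≤ φ b := by
  set T := Icc a b ∩ φ ⁻¹' Iic (φ b)
  have hT : IsClosed T := by
    obtain ⟨v, hv, hTv⟩ := lowerSemicontinuousOn_iff_preimage_Iic.1 hφ (φ b)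
    simpa only [T, hTv] using isClosed_Icc.inter hv
  have hbT : b ∈ T := ⟨right_mem_Icc.2 hab, mem_preimage.2 self_mem_Iic⟩
  have hTbdd : BddBelow T := bddBelow_Icc.mono inter_subset_left
  obtain ⟨⟨haτ, hτb⟩, hτ⟩ : sInf T ∈ T := hT.csInf_mem ⟨b, hbT⟩ hTbdd
  rcases haτ.eq_or_lt with hτa | haτ
  · rwa [← hτa] at hτ
  · obtain ⟨r, hr, har, hrτ⟩ :=
      ((hdesc _ ⟨haτ, hτb⟩).and_eventually (Ioo_mem_nhdsLT haτ)).exists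
    have hrT : r ∈ T := ⟨⟨har.le, hrτ.le.trans hτb⟩, hr.le.trans hτ⟩
    exact absurd (csInf_le hTbdd hrT) (not_le.2 hrτ)

lemma LowerSemicontinuousOn.monotoneOn_of_frequently_nhdsLT_lt {φ : ℝ → ℝ} {J : Set ℝ}
    [J.OrdConnected] (hφ : LowerSemicontinuousOn φ J)
    (hdesc : ∀ τ ∈ J, ∃ᶠ r in 𝓝[<] τ, φ r < φ τ) : MonotoneOn φ J := by
  intro p hp q hq hpq
  have hpqJ : Icc p q ⊆ J := Set.Icc_subset J hp hq
  exact (hφ.mono hpqJ).le_of_frequently_nhdsLT_lt hpq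
    fun τ hτ => hdesc τ (hpqJ (Ioc_subset_Icc_self hτ))

theorem PseudoconvexOn.le_max_of_lowerSemicontinuousOn {φ : ℝ → ℝ} {a b : ℝ}
    (hpc : PseudoconvexOn φ (Icc a b)) (hφ : LowerSemicontinuousOn φ (Icc a b))
    {t : ℝ} (ht : t ∈ Icc a b) : φ t ≤ max (φ a) (φ b) := by
  by_contra! hlt
  have hab : a ≤ b := ht.1.trans ht.2
  have hta : a < t := ht.1.lt_of_ne (by rintro rfl; exact absurd hlt (not_lt.2 (le_max_left _ _)))
  have htb : t < b := ht.2.lt_of_ne (by rintro rfl; exact absurd hlt (not_lt.2 (le_max_right _ _)))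
  have hnhds : ∀ᶠ r in 𝓝 t, max (φ a) (φ b) < φ r ∧ r ∈ Ioo a b := by
    have hlsc := hφ t ht _ hlt
    rw [nhdsWithin_eq_nhds.2 (Icc_mem_nhds hta htb)] at hlsc
    exact hlsc.and (Ioo_mem_nhds hta htb)
  obtain ⟨l, u, htlu, hlu⟩ := mem_nhds_iff_exists_Ioo_subset.1 hnhds
  have hmono : MonotoneOn φ (Ioo l u) := by
    refine (hφ.mono fun r hr => Ioo_subset_Icc_self (hlu hr).2).monotoneOn_of_frequently_nhdsLT_lt
      fun τ hτ => ?_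
    obtain ⟨hτM, hτa, hτb⟩ := hlu hτ
    exact hpc.frequently_nhdsLT_lt ⟨hτa.le, hτb.le⟩ (left_mem_Icc.2 hab) hτa
      ((le_max_left _ _).trans_lt hτM)
  have hright : ∃ᶠ r in 𝓝[>] t, φ r < φ t :=
    hpc.frequently_nhdsGT_lt ht (right_mem_Icc.2 hab) htb ((le_max_right _ _).trans_lt hlt)
  obtain ⟨r, hr, htr, hru⟩ := (hright.and_eventually (Ioo_mem_nhdsGT htlu.2)).exists
  exact absurd hr (not_lt.2 <| hmono htlu ⟨htlu.1.trans htr, hru⟩ htr.le)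

lemma PseudoconvexOnV.pseudoconvexOn_segment {n : ℕ} {f : (Fin n → ℝ) → ℝ}
    {X : Set (Fin n → ℝ)} (hpc : PseudoconvexOnV f X) (hX : Convex ℝ X) {x y : Fin n → ℝ}
    (hx : x ∈ X) (hy : y ∈ X) : PseudoconvexOn (fun t : ℝ => f (x + t • (y - x))) (Icc 0 1) := by
  intro p hp q hq hlt
  have hdini := hpc _ (hX.add_smul_sub_mem hx hy hp) _ (hX.add_smul_sub_mem hx hy hq) hlt
  have hline : ∀ r : ℝ, x + p • (y - x) + r • (x + q • (y - x) - (x + p • (y - x)))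
      = x + (p + r * (q - p)) • (y - x) := fun r => by module
  rw [diniV] at hdini
  simp only [hline] at hdini
  exact hdini

theorem stmt9 {n : ℕ} (X : Set (Fin n → ℝ)) (hX : Convex ℝ X)
    (f : (Fin n → ℝ) → ℝ) (hlsc : RadiallyLSC f X) (hpc : PseudoconvexOnV f X) :
    QuasiconvexOnSeg f X := by
  intro x hx y hy t ht
  simpa using (hpc.pseudoconvexOn_segment hX hx hy).le_max_of_lowerSemicontinuousOn
    (hlsc x hx y hy) ht
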